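/- arXiv:1602.01154 — 6 statements merged into one kernel-verified Lean document; each statement's English description precedes it below -/
import Mathlib

section
/- If 0 < q < 1, 0 < c < v, and 0 ≤ s < q(v-c)(1-q), then p := (q(v-c)(1-q) - s)/(q(v-c)(1-q) - s·q) satisfies 0 < p ≤ 1, and p is a strictly decreasing function of s on [0, q(v-c)(1-q)); moreover p = 1 when s = 0 and p → 0 as s → q(v-c)(1-q). -/
open Filter Set

theorem stmt_0 (q c v : ℝ) (hq0 : 0 < q) (hq1 : q < 1) (hc0 : 0 < c) (hcv : c < v) :
    (∀ s, 0 ≤ s → s < q * (v - c) * (1 - q) →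
      0 < (q * (v - c) * (1 - q) - s) / (q * (v - c) * (1 - q) - s * q) ∧
      (q * (v - c) * (1 - q) - s) / (q * (v - c) * (1 - q) - s * q) ≤ 1) ∧
    StrictAntiOn (fun s => (q * (v - c) * (1 - q) - s) / (q * (v - c) * (1 - q) - s * q))
      (Set.Ico 0 (q * (v - c) * (1 - q))) ∧
    (q * (v - c) * (1 - q) - 0) / (q * (v - c) * (1 - q) - 0 * q) = 1 ∧
    Tendsto (fun s => (q * (v - c) * (1 - q) - s) / (q * (v - c) * (1 - q) - s * q))
      (nhdsWithin (q * (v - c) * (1 - q)) (Set.Ico 0 (q * (v - c) * (1 - q)))) (nhds 0) := by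
  set A := q * (v - c) * (1 - q) with hA
  have hApos : 0 < A := by
    apply mul_pos (mul_pos hq0 (by linarith)) (by linarith)
  have hden : ∀ s : ℝ, 0 ≤ s → s < A → 0 < A - s * q := by
    intro s hs hsA
    nlinarith
  refine ⟨?_, ?_, ?_, ?_⟩
  · intro s hs hsA
    have hd := hden s hs hsA
    constructor
    · exact div_pos (by linarith) hd
    · rw [div_le_one hd]; nlinarith
  · intro s1 hs1 s2 hs2 h12
    simp only [mem_Ico] at hs1 hs2
    have hd1 := hden s1 hs1.1 hs1.2
    have hd2 := hden s2 hs2.1 hs2.2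
    simp only
    rw [div_lt_div_iff₀ hd2 hd1]
    nlinarith [mul_pos (mul_pos hApos (sub_pos.mpr h12)) (show (0:ℝ) < 1 - q by linarith)]
  · simp [div_self (ne_of_gt hApos)]
  · have hdA : A - A * q ≠ 0 := by nlinarith
    have hc : ContinuousAt (fun s => (A - s) / (A - s * q)) A := by
      apply ContinuousAt.div
      · fun_prop
      · fun_prop
      · exact hdA
    have := hc.tendsto.mono_left (nhdsWithin_le_nhds (s := Set.Ico 0 A))
    simpa using this
end

section
/- For 0 < c < v and 0 < s < (v-c)/4, the function q ↦ (q(v-c)(1-q) - s)/(q(v-c)(1-q) - sq), defined on the set of q ∈ (0,1) where q(v-c)(1-q) > s, attains its maximum at q* = 1 - sqrt(s/(v-c)), and q* > 1/2. -/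
open Set

theorem stmt_1 (c v s : ℝ) (hc0 : 0 < c) (hcv : c < v) (hs0 : 0 < s) (hs : s < (v - c) / 4) :
    (1 - Real.sqrt (s / (v - c))) ∈
      {q : ℝ | 0 < q ∧ q < 1 ∧ q * (v - c) * (1 - q) > s} ∧
    (∀ q ∈ {q : ℝ | 0 < q ∧ q < 1 ∧ q * (v - c) * (1 - q) > s},
      (q * (v - c) * (1 - q) - s) / (q * (v - c) * (1 - q) - s * q) ≤
        ((1 - Real.sqrt (s / (v - c))) * (v - c) * (1 - (1 - Real.sqrt (s / (v - c)))) - s) /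
          ((1 - Real.sqrt (s / (v - c))) * (v - c) * (1 - (1 - Real.sqrt (s / (v - c)))) -
            s * (1 - Real.sqrt (s / (v - c))))) ∧
    1 - Real.sqrt (s / (v - c)) > 1 / 2 := by
  set w := v - c with hw
  have hw0 : 0 < w := by simp [hw]; linarith
  set t := Real.sqrt (s / w) with htdef
  have ht0 : 0 < t := Real.sqrt_pos.mpr (div_pos hs0 hw0)
  have ht2 : t ^ 2 = s / w := Real.sq_sqrt (le_of_lt (div_pos hs0 hw0))
  have hst : s = t ^ 2 * w := by field_simp at ht2 ⊢; linarith
  have ht12 : t < 1 / 2 := by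
    have h14 : Real.sqrt (1 / 4) = 1 / 2 := by
      rw [show (1 / 4 : ℝ) = (1 / 2) ^ 2 by norm_num, Real.sqrt_sq (by norm_num)]
    calc t < Real.sqrt (1 / 4) := by
            apply Real.sqrt_lt_sqrt (le_of_lt (div_pos hs0 hw0))
            rw [div_lt_iff₀ hw0]; linarith
      _ = 1 / 2 := h14
  have hq0 : 0 < 1 - t := by linarith
  have hq1 : 1 - t < 1 := by linarith
  have hmem : (1 - t) * w * (1 - (1 - t)) > s := by nlinarith
  refine ⟨⟨hq0, hq1, hmem⟩, ?_, by linarith⟩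
  intro q hq
  obtain ⟨hq0', hq1', hA⟩ := hq
  have hD : 0 < q * w * (1 - q) - s * q := by nlinarith
  have hD' : 0 < (1 - t) * w * (1 - (1 - t)) - s * (1 - t) := by nlinarith
  rw [div_le_div_iff₀ hD hD']
  nlinarith [sq_nonneg (1 - q - t), mul_pos ht0 hw0, mul_pos (mul_pos hs0 hw0) ht0,
    mul_nonneg (mul_nonneg (le_of_lt (mul_pos hs0 hw0)) (le_of_lt ht0)) (sq_nonneg (1 - q - t))]
end

section
/- Let 0 < q < 1, 1/2 < q_s ≤ 1, c < v, and 0 < s < (v-c)(1-q)(2qq_s - q) with 2qq_s - q > 0. Define G(p) = (v-c)(1-q)q_s · ((1-(1-p)q - pqq_s)/(pq(1-q_s)² + q_s(1-q))) · (1 - (qq_s(1-pq_s)+(1-q)(1-q_s))/(1-pqq_s)). Then G is strictly increasing and continuous on [0,1], G(0) = (v-c)(1-q)(q_s + q - 2qq_s) < (v-c)(1-q)q_s - s, and G(1) = (v-c)(1-q)q_s > (v-c)(1-q)q_s - s; hence there exists a unique p ∈ (0,1) with G(p) = (v-c)(1-q)q_s - s, and this p is strictly decreasing in s. -/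
open Set

/-! Both fractions in `G` are linear-fractional in `p`. The first, `((1 - q) + q (1 - qs) p) /
(qs (1 - q) + q (1 - qs)² p)`, has determinant `q (1 - q) (1 - qs) (2 qs - 1) ≥ 0`, so it is
nondecreasing; the second, `(qs (1 - q) + q (1 - qs) - q qs (1 - qs) p) / (1 - q qs p)`, has
determinant `q qs (1 - q) (2 qs - 1) > 0`, so it is strictly increasing. Both are positive on
`[0, 1]`, hence `G` is strictly increasing there. At `p = 1` the two fractions are reciprocal,
which gives `G 1 = (v - c) (1 - q) qs`. The intermediate value theorem and strict monotonicity
then give the unique root, and its strict decrease in `s`. -/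

section LinearFractional

variable {𝕜 : Type*} [Field 𝕜] [LinearOrder 𝕜] [IsStrictOrderedRing 𝕜] {a b c d : 𝕜} {s : Set 𝕜}

theorem monotoneOn_linearFrac (hden : ∀ x ∈ s, 0 < c + d * x) (hdet : 0 ≤ b * c - a * d) :
    MonotoneOn (fun x => (a + b * x) / (c + d * x)) s := by
  intro x hx y hy hxy
  rw [div_le_div_iff₀ (hden x hx) (hden y hy)]
  nlinarith [mul_nonneg hdet (sub_nonneg.2 hxy)]

theorem strictMonoOn_linearFrac (hden : ∀ x ∈ s, 0 < c + d * x) (hdet : 0 < b * c - a * d) :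
    StrictMonoOn (fun x => (a + b * x) / (c + d * x)) s := by
  intro x hx y hy hxy
  rw [div_lt_div_iff₀ (hden x hx) (hden y hy)]
  nlinarith [mul_pos hdet (sub_pos.2 hxy)]

end LinearFractional

theorem MonotoneOn.mul_strictMonoOn_of_pos {α M₀ : Type*} [Preorder α] [Mul M₀] [Zero M₀]
    [Preorder M₀] [PosMulStrictMono M₀] [MulPosMono M₀] {f g : α → M₀} {s : Set α}
    (hf : MonotoneOn f s) (hg : StrictMonoOn g s) (hf₀ : ∀ x ∈ s, 0 < f x)
    (hg₀ : ∀ x ∈ s, 0 ≤ g x) : StrictMonoOn (f * g) s :=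
  fun x hx y hy hxy =>
    (mul_le_mul_of_nonneg_right (hf hx hy hxy.le) (hg₀ x hx)).trans_lt
      (mul_lt_mul_of_pos_left (hg hx hy hxy) (hf₀ y hy))

theorem StrictMonoOn.existsUnique_mem_Ioo_eq {α δ : Type*} [ConditionallyCompleteLinearOrder α]
    [TopologicalSpace α] [OrderTopology α] [DenselyOrdered α] [LinearOrder δ]
    [TopologicalSpace δ] [OrderClosedTopology δ] {f : α → δ} {a b : α} {y : δ}
    (hf : StrictMonoOn f (Icc a b)) (hc : ContinuousOn f (Icc a b)) (hab : a ≤ b)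
    (hy : y ∈ Ioo (f a) (f b)) : ∃! x, x ∈ Ioo a b ∧ f x = y := by
  obtain ⟨x, hx, rfl⟩ := intermediate_value_Ioo hab hc hy
  exact ⟨x, ⟨hx, rfl⟩, fun x' ⟨hx', hfx'⟩ =>
    hf.injOn (Ioo_subset_Icc_self hx') (Ioo_subset_Icc_self hx) hfx'⟩

noncomputable def ratioTerm (q qs p : ℝ) : ℝ :=
  (1 - (1 - p) * q - p * q * qs) / (p * q * (1 - qs) ^ 2 + qs * (1 - q))

noncomputable def complementTerm (q qs p : ℝ) : ℝ :=
  1 - (q * qs * (1 - p * qs) + (1 - q) * (1 - qs)) / (1 - p * q * qs)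

section Factors

variable {q qs : ℝ}

theorem ratioTerm_eq_linearFrac (q qs p : ℝ) :
    ratioTerm q qs p = ((1 - q) + q * (1 - qs) * p) / (qs * (1 - q) + q * (1 - qs) ^ 2 * p) := by
  unfold ratioTerm
  congr 1 <;> ring

theorem complementTerm_eq_linearFrac {p : ℝ} (h : 1 - p * q * qs ≠ 0) :
    complementTerm q qs p =
      (qs * (1 - q) + q * (1 - qs) + -(q * qs * (1 - qs)) * p) / (1 + -(q * qs) * p) := by
  rw [complementTerm, one_sub_div h]
  congr 1 <;> ring

theorem ratioTerm_den_pos (hq0 : 0 ≤ q) (hq1 : q < 1) (hqs0 : 0 < qs) {p : ℝ} (hp : 0 ≤ p) :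
    0 < qs * (1 - q) + q * (1 - qs) ^ 2 * p := by
  have : 0 < qs * (1 - q) := mul_pos hqs0 (sub_pos.2 hq1)
  positivity

theorem complementTerm_den_pos (hq0 : 0 ≤ q) (hq1 : q < 1) (hqs0 : 0 ≤ qs) (hqs1 : qs ≤ 1)
    {p : ℝ} (hp : p ∈ Icc (0 : ℝ) 1) : 0 < 1 - p * q * qs := by
  have : p * q * qs ≤ q := by
    calc p * q * qs ≤ 1 * q * 1 := by gcongr; exact hp.2
      _ = q := by ring
  linarith

theorem monotoneOn_ratioTerm (hq0 : 0 ≤ q) (hq1 : q < 1) (hqs : 1 / 2 < qs) (hqs1 : qs ≤ 1) :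
    MonotoneOn (ratioTerm q qs) (Icc 0 1) := by
  rw [show ratioTerm q qs = _ from funext (ratioTerm_eq_linearFrac q qs)]
  refine monotoneOn_linearFrac (fun p hp => ratioTerm_den_pos hq0 hq1 (by linarith) hp.1) ?_
  have : 0 ≤ q * (1 - q) * (1 - qs) * (2 * qs - 1) := by
    have := sub_nonneg.2 hq1.le; have := sub_nonneg.2 hqs1; have : 0 ≤ 2 * qs - 1 := by linarith
    positivity
  linarith

theorem strictMonoOn_complementTerm (hq0 : 0 < q) (hq1 : q < 1) (hqs : 1 / 2 < qs)
    (hqs1 : qs ≤ 1) : StrictMonoOn (complementTerm q qs) (Icc 0 1) := by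
  have hden := fun p (hp : p ∈ Icc (0 : ℝ) 1) =>
    complementTerm_den_pos hq0.le hq1 (by linarith) hqs1 hp
  refine (strictMonoOn_linearFrac (fun p hp => ?_) ?_).congr
    fun p hp => (complementTerm_eq_linearFrac (hden p hp).ne').symm
  · linarith [hden p hp]
  · have : 0 < q * qs * (1 - q) * (2 * qs - 1) := by
      have := sub_pos.2 hq1; have : 0 < qs := by linarith
      have : 0 < 2 * qs - 1 := by linarith
      positivity
    linarith

theorem ratioTerm_pos (hq0 : 0 ≤ q) (hq1 : q < 1) (hqs0 : 0 < qs) (hqs1 : qs ≤ 1) {p : ℝ}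
    (hp : 0 ≤ p) : 0 < ratioTerm q qs p := by
  rw [ratioTerm_eq_linearFrac]
  have := sub_pos.2 hq1; have := sub_nonneg.2 hqs1
  exact div_pos (by positivity) (ratioTerm_den_pos hq0 hq1 hqs0 hp)

theorem complementTerm_pos (hq0 : 0 ≤ q) (hq1 : q < 1) (hqs0 : 0 < qs) (hqs1 : qs ≤ 1) {p : ℝ}
    (hp : p ∈ Icc (0 : ℝ) 1) : 0 < complementTerm q qs p := by
  have hden := complementTerm_den_pos hq0 hq1 hqs0.le hqs1 hp
  rw [complementTerm_eq_linearFrac hden.ne']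
  refine div_pos ?_ (by linarith)
  have : 0 ≤ q * (1 - qs) * (1 - qs * p) := by
    have := sub_nonneg.2 hqs1
    have : 0 ≤ 1 - qs * p := by nlinarith [hp.1, hp.2]
    positivity
  nlinarith [mul_pos hqs0 (sub_pos.2 hq1)]

theorem continuousOn_ratioTerm (hq0 : 0 ≤ q) (hq1 : q < 1) (hqs0 : 0 < qs) :
    ContinuousOn (ratioTerm q qs) (Icc 0 1) := by
  rw [show ratioTerm q qs = _ from funext (ratioTerm_eq_linearFrac q qs)]
  exact ContinuousOn.div (by fun_prop) (by fun_prop)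
    fun p hp => (ratioTerm_den_pos hq0 hq1 hqs0 hp.1).ne'

theorem continuousOn_complementTerm (hq0 : 0 ≤ q) (hq1 : q < 1) (hqs0 : 0 ≤ qs) (hqs1 : qs ≤ 1) :
    ContinuousOn (complementTerm q qs) (Icc 0 1) :=
  continuousOn_const.sub <| ContinuousOn.div (by fun_prop) (by fun_prop)
    fun _ hp => (complementTerm_den_pos hq0 hq1 hqs0 hqs1 hp).ne'

theorem ratioTerm_zero (hq1 : q ≠ 1) (hqs0 : qs ≠ 0) : ratioTerm q qs 0 = qs⁻¹ := by
  have : 1 - q ≠ 0 := sub_ne_zero.2 hq1.symm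
  rw [ratioTerm]
  field_simp
  ring

theorem complementTerm_zero (q qs : ℝ) : complementTerm q qs 0 = qs + q - 2 * q * qs := by
  rw [complementTerm]
  ring

theorem ratioTerm_one_mul_complementTerm_one (hq0 : 0 ≤ q) (hq1 : q < 1) (hqs0 : 0 < qs)
    (hqs1 : qs ≤ 1) : ratioTerm q qs 1 * complementTerm q qs 1 = 1 := by
  have h1 := (ratioTerm_den_pos hq0 hq1 hqs0 zero_le_one).ne'
  have h2 := (complementTerm_den_pos hq0 hq1 hqs0.le hqs1 (right_mem_Icc.2 zero_le_one)).ne'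
  rw [ratioTerm_eq_linearFrac, complementTerm_eq_linearFrac h2, div_mul_div_comm,
    div_eq_one_iff_eq (mul_ne_zero h1 (by convert h2 using 1; ring))]
  ring

end Factors

theorem stmt_6_general (q qs c v s : ℝ) (hq0 : 0 < q) (hq1 : q < 1) (hqs : 1 / 2 < qs)
    (hqs1 : qs ≤ 1) (hcv : c < v)
    (hs0 : 0 < s) (hs : s < (v - c) * (1 - q) * (2 * q * qs - q)) :
    let G : ℝ → ℝ := fun p =>
      (v - c) * (1 - q) * qs *
        ((1 - (1 - p) * q - p * q * qs) / (p * q * (1 - qs) ^ 2 + qs * (1 - q))) *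
        (1 - (q * qs * (1 - p * qs) + (1 - q) * (1 - qs)) / (1 - p * q * qs))
    StrictMonoOn G (Set.Icc 0 1) ∧ ContinuousOn G (Set.Icc 0 1) ∧
    G 0 = (v - c) * (1 - q) * (qs + q - 2 * q * qs) ∧
    G 0 < (v - c) * (1 - q) * qs - s ∧
    G 1 = (v - c) * (1 - q) * qs ∧
    G 1 > (v - c) * (1 - q) * qs - s ∧
    (∃! p, p ∈ Set.Ioo (0 : ℝ) 1 ∧ G p = (v - c) * (1 - q) * qs - s) ∧
    (∀ s₁ s₂ p₁ p₂, 0 < s₁ → s₁ < s₂ → s₂ < (v - c) * (1 - q) * (2 * q * qs - q) →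
      p₁ ∈ Set.Ioo (0 : ℝ) 1 → p₂ ∈ Set.Ioo (0 : ℝ) 1 →
      G p₁ = (v - c) * (1 - q) * qs - s₁ → G p₂ = (v - c) * (1 - q) * qs - s₂ →
      p₂ < p₁) := by
  intro G
  have hqs0 : 0 < qs := by linarith
  have hA : 0 < (v - c) * (1 - q) * qs := by
    have := sub_pos.2 hcv; have := sub_pos.2 hq1; positivity
  have hmono : StrictMonoOn G (Icc 0 1) :=
    (monotoneOn_const.mul (monotoneOn_ratioTerm hq0.le hq1 hqs hqs1) (fun _ _ => hA.le)
        fun _ hp => (ratioTerm_pos hq0.le hq1 hqs0 hqs1 hp.1).le).mul_strictMonoOn_of_pos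
      (strictMonoOn_complementTerm hq0 hq1 hqs hqs1)
      (fun p hp => mul_pos hA (ratioTerm_pos hq0.le hq1 hqs0 hqs1 hp.1))
      (fun p hp => (complementTerm_pos hq0.le hq1 hqs0 hqs1 hp).le)
  have hcont : ContinuousOn G (Icc 0 1) :=
    (continuousOn_const.mul (continuousOn_ratioTerm hq0.le hq1 hqs0)).mul
      (continuousOn_complementTerm hq0.le hq1 hqs0.le hqs1)
  have hG0 : G 0 = (v - c) * (1 - q) * (qs + q - 2 * q * qs) := by
    change (v - c) * (1 - q) * qs * ratioTerm q qs 0 * complementTerm q qs 0 = _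
    rw [ratioTerm_zero hq1.ne hqs0.ne', complementTerm_zero]
    field_simp
  have hG1 : G 1 = (v - c) * (1 - q) * qs := by
    change (v - c) * (1 - q) * qs * ratioTerm q qs 1 * complementTerm q qs 1 = _
    rw [mul_assoc, ratioTerm_one_mul_complementTerm_one hq0.le hq1 hqs0 hqs1, mul_one]
  have hlow : G 0 < (v - c) * (1 - q) * qs - s := by rw [hG0]; linarith
  have hhigh : G 1 > (v - c) * (1 - q) * qs - s := by rw [hG1]; linarith
  refine ⟨hmono, hcont, hG0, hlow, hG1, hhigh,
    hmono.existsUnique_mem_Ioo_eq hcont zero_le_one ⟨hlow, hhigh⟩, ?_⟩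
  intro s₁ s₂ p₁ p₂ _ hs₁₂ _ hp₁ hp₂ hGp₁ hGp₂
  exact (hmono.lt_iff_lt (Ioo_subset_Icc_self hp₂) (Ioo_subset_Icc_self hp₁)).1
    (by rw [hGp₁, hGp₂]; linarith)

theorem stmt_6 (q qs c v s : ℝ) (hq0 : 0 < q) (hq1 : q < 1) (hqs : 1 / 2 < qs)
    (hqs1 : qs ≤ 1) (hcv : c < v) (hthr : 0 < 2 * q * qs - q)
    (hs0 : 0 < s) (hs : s < (v - c) * (1 - q) * (2 * q * qs - q)) :
    let G : ℝ → ℝ := fun p =>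
      (v - c) * (1 - q) * qs *
        ((1 - (1 - p) * q - p * q * qs) / (p * q * (1 - qs) ^ 2 + qs * (1 - q))) *
        (1 - (q * qs * (1 - p * qs) + (1 - q) * (1 - qs)) / (1 - p * q * qs))
    StrictMonoOn G (Set.Icc 0 1) ∧ ContinuousOn G (Set.Icc 0 1) ∧
    G 0 = (v - c) * (1 - q) * (qs + q - 2 * q * qs) ∧
    G 0 < (v - c) * (1 - q) * qs - s ∧
    G 1 = (v - c) * (1 - q) * qs ∧
    G 1 > (v - c) * (1 - q) * qs - s ∧
    (∃! p, p ∈ Set.Ioo (0 : ℝ) 1 ∧ G p = (v - c) * (1 - q) * qs - s) ∧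
    (∀ s₁ s₂ p₁ p₂, 0 < s₁ → s₁ < s₂ → s₂ < (v - c) * (1 - q) * (2 * q * qs - q) →
      p₁ ∈ Set.Ioo (0 : ℝ) 1 → p₂ ∈ Set.Ioo (0 : ℝ) 1 →
      G p₁ = (v - c) * (1 - q) * qs - s₁ → G p₂ = (v - c) * (1 - q) * qs - s₂ →
      p₂ < p₁) :=
  stmt_6_general q qs c v s hq0 hq1 hqs hqs1 hcv hs0 hs
end

section
/- Let 0 < q < 1, 1/2 < q_s < 1, c < v, 0 < s < (v-c)(1-q)(2qq_s - q). Let p ∈ (0,1) be the unique solution of the equilibrium equation (as in the estimation-error NE), and define p̃₂ - c = (v-c)(1-q)q_s·(1-(1-p)q - pqq_s)/(pq(1-q_s)² + q_s(1-q)). Then p̃₂ - c is strictly increasing in p, and since p = 0 gives p̃₂ - c = (v-c)(1-q), we have p̃₂ - c > (v-c)(1-q); consequently the equilibrium payoff p̃₂ - c strictly exceeds (v-c)(1-q) and strictly increases as s decreases. -/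
open Set

set_option maxHeartbeats 1000000 in
theorem stmt_7 (q qs c v : ℝ) (hq0 : 0 < q) (hq1 : q < 1) (hqs : 1 / 2 < qs)
    (hqs1 : qs < 1) (hcv : c < v) :
    let f : ℝ → ℝ := fun p =>
      (v - c) * (1 - q) * qs * (1 - (1 - p) * q - p * q * qs) /
        (p * q * (1 - qs) ^ 2 + qs * (1 - q))
    let G : ℝ → ℝ := fun p =>
      f p * (1 - (q * qs * (1 - p * qs) + (1 - q) * (1 - qs)) / (1 - p * q * qs))
    StrictMonoOn f (Set.Icc 0 1) ∧
    f 0 = (v - c) * (1 - q) ∧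
    (∀ p ∈ Set.Ioo (0 : ℝ) 1, f p > (v - c) * (1 - q)) ∧
    (∀ s₁ s₂ p₁ p₂, 0 < s₁ → s₁ < s₂ → s₂ < (v - c) * (1 - q) * (2 * q * qs - q) →
      p₁ ∈ Set.Ioo (0 : ℝ) 1 → p₂ ∈ Set.Ioo (0 : ℝ) 1 →
      G p₁ = (v - c) * (1 - q) * qs - s₁ → G p₂ = (v - c) * (1 - q) * qs - s₂ →
      f p₂ < f p₁) := by
  intro f G
  have hv : (0:ℝ) < v - c := by linarith
  have hq1' : (0:ℝ) < 1 - q := by linarith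
  have hqs' : (0:ℝ) < 1 - qs := by linarith
  have hqsp : (0:ℝ) < qs := by linarith
  have h2qs : (0:ℝ) < 2 * qs - 1 := by linarith
  -- denominator of f positive
  have hfD : ∀ p ∈ Icc (0:ℝ) 1, 0 < p * q * (1 - qs) ^ 2 + qs * (1 - q) := by
    intro p hp
    have h1 : 0 ≤ p * q * (1 - qs) ^ 2 := mul_nonneg (mul_nonneg hp.1 hq0.le) (sq_nonneg _)
    nlinarith [mul_pos hqsp hq1']
  have hfmono : StrictMonoOn f (Icc 0 1) := by
    intro p1 hp1 p2 hp2 h12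
    have d1 := hfD p1 hp1
    have d2 := hfD p2 hp2
    show (v - c) * (1 - q) * qs * (1 - (1 - p1) * q - p1 * q * qs) /
        (p1 * q * (1 - qs) ^ 2 + qs * (1 - q)) <
      (v - c) * (1 - q) * qs * (1 - (1 - p2) * q - p2 * q * qs) /
        (p2 * q * (1 - qs) ^ 2 + qs * (1 - q))
    rw [div_lt_div_iff₀ d1 d2]
    have key : 0 < (v - c) * (1 - q) * qs * (q * (1 - qs) * ((1 - q) *
        ((2 * qs - 1) * (p2 - p1)))) :=
      mul_pos (mul_pos (mul_pos hv hq1') hqsp) (mul_pos (mul_pos hq0 hqs')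
        (mul_pos hq1' (mul_pos h2qs (by linarith : (0:ℝ) < p2 - p1))))
    nlinarith [key]
  have hf0 : f 0 = (v - c) * (1 - q) := by
    show (v - c) * (1 - q) * qs * (1 - (1 - 0) * q - 0 * q * qs) /
        (0 * q * (1 - qs) ^ 2 + qs * (1 - q)) = (v - c) * (1 - q)
    field_simp
    ring
  refine ⟨hfmono, hf0, ?_, ?_⟩
  · intro p hp
    have := hfmono (by constructor <;> norm_num) ⟨le_of_lt hp.1, le_of_lt hp.2⟩ hp.1
    rw [hf0] at this
    exact this
  · intro s₁ s₂ p₁ p₂ hs1 hs12 hs2 hp1 hp2 hG1 hG2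
    -- positivity facts on Icc 0 1
    have hfpos : ∀ p ∈ Icc (0:ℝ) 1, 0 < f p := by
      intro p hp
      have d := hfD p hp
      have hn : 0 < (v - c) * (1 - q) * qs * (1 - (1 - p) * q - p * q * qs) := by
        have : 0 < 1 - (1 - p) * q - p * q * qs := by nlinarith [hp.1, hp.2, mul_pos hq0 hqs']
        positivity
      exact div_pos hn d
    have hHd : ∀ p ∈ Icc (0:ℝ) 1, 0 < 1 - p * q * qs := by
      intro p hp
      nlinarith [hp.1, hp.2, mul_pos hq0 hqsp]
    have hhpos : ∀ p ∈ Icc (0:ℝ) 1,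
        0 < 1 - (q * qs * (1 - p * qs) + (1 - q) * (1 - qs)) / (1 - p * q * qs) := by
      intro p hp
      have d := hHd p hp
      rw [sub_pos, div_lt_one d]
      nlinarith [hp.1, hp.2, mul_pos (mul_pos hq0 hqsp) hqs', mul_pos hqsp hq1',
        mul_pos (mul_pos hq0 hqs') hqs']
    have hhmono : ∀ p1 ∈ Icc (0:ℝ) 1, ∀ p2 ∈ Icc (0:ℝ) 1, p1 < p2 →
        1 - (q * qs * (1 - p1 * qs) + (1 - q) * (1 - qs)) / (1 - p1 * q * qs) <
        1 - (q * qs * (1 - p2 * qs) + (1 - q) * (1 - qs)) / (1 - p2 * q * qs) := by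
      intro p1 hp1 p2 hp2 h12
      have d1 := hHd p1 hp1
      have d2 := hHd p2 hp2
      have hlt : (q * qs * (1 - p2 * qs) + (1 - q) * (1 - qs)) / (1 - p2 * q * qs) <
          (q * qs * (1 - p1 * qs) + (1 - q) * (1 - qs)) / (1 - p1 * q * qs) := by
        rw [div_lt_div_iff₀ d2 d1]
        have key : 0 < q * qs * ((1 - q) * ((2 * qs - 1) * (p2 - p1))) :=
          mul_pos (mul_pos hq0 hqsp) (mul_pos hq1'
            (mul_pos h2qs (by linarith : (0:ℝ) < p2 - p1)))
        nlinarith [key]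
      linarith
    have hGmono : ∀ p1 ∈ Icc (0:ℝ) 1, ∀ p2 ∈ Icc (0:ℝ) 1, p1 < p2 → G p1 < G p2 := by
      intro p1 hp1 p2 hp2 h12
      have h1 := hfpos p1 hp1
      have h2 := hfpos p2 hp2
      have h3 := hhpos p1 hp1
      have h4 := hhpos p2 hp2
      have h5 := hfmono hp1 hp2 h12
      have h6 := hhmono p1 hp1 p2 hp2 h12
      exact mul_lt_mul h5 h6.le h3 h2.le
    have hp1' : p₁ ∈ Icc (0:ℝ) 1 := ⟨le_of_lt hp1.1, le_of_lt hp1.2⟩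
    have hp2' : p₂ ∈ Icc (0:ℝ) 1 := ⟨le_of_lt hp2.1, le_of_lt hp2.2⟩
    have hGlt : G p₂ < G p₁ := by rw [hG1, hG2]; linarith
    have hplt : p₂ < p₁ := by
      by_contra hle
      push_neg at hle
      rcases lt_or_eq_of_le hle with h | h
      · exact absurd (hGmono p₁ hp1' p₂ hp2' h) (by linarith)
      · rw [h] at hGlt; linarith
    exact hfmono hp2' hp1' hplt
end

section
/- Let c < v, 0 < q₂ < q₁ < 1, and 0 < s < q₂(v-c)(1-q₁)/(1-q₁+q₂). Define p₁ = (q₁(v-c)(1-q₂) - s(q₁/q₂ - q₁ + q₂))/(q₁(v-c)(1-q₂) - q₁s) and p₂ = (q₂(v-c)(1-q₁) - s(1-q₁+q₂))/(q₂(v-c)(1-q₁) - q₂s). Then p₁ > p₂. -/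
theorem stmt_15 (q₁ q₂ c v s : ℝ) (hcv : c < v) (hq2 : 0 < q₂) (hq21 : q₂ < q₁) (hq1 : q₁ < 1)
    (hs0 : 0 < s) (hs : s < q₂ * (v - c) * (1 - q₁) / (1 - q₁ + q₂)) :
    (q₁ * (v - c) * (1 - q₂) - s * (q₁ / q₂ - q₁ + q₂)) / (q₁ * (v - c) * (1 - q₂) - q₁ * s) >
      (q₂ * (v - c) * (1 - q₁) - s * (1 - q₁ + q₂)) / (q₂ * (v - c) * (1 - q₁) - q₂ * s) := by
  have hw : 0 < v - c := by linarith
  have hq1' : 0 < 1 - q₁ := by linarith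
  have hden : 0 < 1 - q₁ + q₂ := by linarith
  have hs' : s * (1 - q₁ + q₂) < q₂ * (v - c) * (1 - q₁) := by
    rw [div_eq_mul_inv] at hs
    have := (lt_mul_inv_iff₀ hden).mp hs
    linarith
  have hslt : s < (v - c) * (1 - q₁) := by nlinarith
  have hD2 : 0 < q₂ * (v - c) * (1 - q₁) - q₂ * s := by nlinarith
  have hD1 : 0 < q₁ * (v - c) * (1 - q₂) - q₁ * s := by nlinarith
  rw [gt_iff_lt, div_lt_div_iff₀ hD2 hD1]
  have hq2ne : q₂ ≠ 0 := ne_of_gt hq2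
  rw [← mul_lt_mul_iff_right₀ hq2]
  have h1 : q₂ * ((q₁ * (v - c) * (1 - q₂) - s * (q₁ / q₂ - q₁ + q₂)) *
      (q₂ * (v - c) * (1 - q₁) - q₂ * s)) =
      (q₁ * q₂ * (v - c) * (1 - q₂) - s * (q₁ - q₁ * q₂ + q₂ ^ 2)) *
      (q₂ * (v - c) * (1 - q₁) - q₂ * s) := by
    have hd : q₁ / q₂ * q₂ = q₁ := div_mul_cancel₀ q₁ hq2ne
    linear_combination (-s * (q₂ * (v - c) * (1 - q₁) - q₂ * s)) * hd
  rw [h1]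
  nlinarith [mul_pos (mul_pos hs0 hq2) (mul_pos (sub_pos.mpr hq21)
      (by nlinarith : (0:ℝ) < q₂ * (v - c) * (1 - q₁) + s * (q₁ - q₂)))]
end

section
/- Let c < v, 0 < q₂ < q₁ < 1, 0 < s < q₂(v-c)(1-q₁)/(1-q₁+q₂), and p₂ = (q₂(v-c)(1-q₁) - s(1-q₁+q₂))/(q₂(v-c)(1-q₁) - q₂s). Then with p̄ - c = (v-c)(1-q₁) + s(q₁-q₂)/q₂ and p̃₂ - c = (p̄-c)/(1-p₂q₁), we have p̃₂ - c = ((v-c)(1-q₁) - s)/(1-q₁), and moreover s/(q₂(1-p₂)) = p̃₂ - c. -/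
/-!
Write `a = (v - c)(1 - q₁)` and `D = q₂ (a - s)`. Then `1 - p₂ = s (1 - q₁) / D` and
`1 - p₂ q₁ = (1 - q₁)(q₂ a + s (q₁ - q₂)) / D`, while `p̄ - c = (q₂ a + s (q₁ - q₂)) / q₂`.
The factor `q₂ a + s (q₁ - q₂)` cancels in `(p̄ - c) / (1 - p₂ q₁)`, and both sides of the
continuity identity reduce to `(a - s) / (1 - q₁)`.
-/

section CSIPricing

variable {q₁ q₂ a s : ℝ}

lemma lt_of_lt_mul_div (hq2 : 0 < q₂) (hq1 : q₁ < 1) (hs0 : 0 < s)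
    (hs : s < q₂ * a / (1 - q₁ + q₂)) : s < a := by
  have hs' : s * (1 - q₁ + q₂) < q₂ * a := (lt_div_iff₀ (by linarith)).mp hs
  nlinarith

lemma one_sub_div_eq (hD : q₂ * a - q₂ * s ≠ 0) :
    1 - (q₂ * a - s * (1 - q₁ + q₂)) / (q₂ * a - q₂ * s) = s * (1 - q₁) / (q₂ * a - q₂ * s) := by
  rw [eq_div_iff hD, sub_mul, div_mul_cancel₀ _ hD]
  ring

lemma one_sub_div_mul_eq (hD : q₂ * a - q₂ * s ≠ 0) :
    1 - (q₂ * a - s * (1 - q₁ + q₂)) / (q₂ * a - q₂ * s) * q₁ =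
      (1 - q₁) * (q₂ * a + s * (q₁ - q₂)) / (q₂ * a - q₂ * s) := by
  rw [eq_div_iff hD, sub_mul, div_mul_eq_mul_div, div_mul_cancel₀ _ hD]
  ring

lemma add_div_div_one_sub_div_mul_eq (hq2 : q₂ ≠ 0) (hq1 : 1 - q₁ ≠ 0) (hsa : a - s ≠ 0)
    (hN : q₂ * a + s * (q₁ - q₂) ≠ 0) :
    (a + s * (q₁ - q₂) / q₂) / (1 - (q₂ * a - s * (1 - q₁ + q₂)) / (q₂ * a - q₂ * s) * q₁) =
      (a - s) / (1 - q₁) := by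
  have hD : q₂ * a - q₂ * s ≠ 0 := by rw [← mul_sub]; exact mul_ne_zero hq2 hsa
  rw [one_sub_div_mul_eq hD, div_eq_div_iff (by positivity) hq1]
  field_simp

lemma div_mul_one_sub_div_eq (hq2 : q₂ ≠ 0) (hq1 : 1 - q₁ ≠ 0) (hs : s ≠ 0) (hsa : a - s ≠ 0) :
    s / (q₂ * (1 - (q₂ * a - s * (1 - q₁ + q₂)) / (q₂ * a - q₂ * s))) = (a - s) / (1 - q₁) := by
  have hD : q₂ * a - q₂ * s ≠ 0 := by rw [← mul_sub]; exact mul_ne_zero hq2 hsa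
  rw [one_sub_div_eq hD, mul_div_assoc', div_div_eq_mul_div, div_eq_div_iff (by positivity) hq1]
  ring

end CSIPricing

theorem stmt_16_general (q₁ q₂ c v s : ℝ) (hq2 : 0 < q₂) (hq21 : q₂ < q₁) (hq1 : q₁ < 1)
    (hs0 : 0 < s) (hs : s < q₂ * (v - c) * (1 - q₁) / (1 - q₁ + q₂)) :
    let p₂ := (q₂ * (v - c) * (1 - q₁) - s * (1 - q₁ + q₂)) / (q₂ * (v - c) * (1 - q₁) - q₂ * s)
    let pbar := c + (v - c) * (1 - q₁) + s * (q₁ - q₂) / q₂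
    let tp2 := c + (pbar - c) / (1 - p₂ * q₁)
    tp2 - c = ((v - c) * (1 - q₁) - s) / (1 - q₁) ∧
    s / (q₂ * (1 - p₂)) = tp2 - c := by
  intro p₂ pbar tp2
  rw [mul_assoc] at hs
  have hsa : s < (v - c) * (1 - q₁) := lt_of_lt_mul_div hq2 hq1 hs0 hs
  have hN : q₂ * ((v - c) * (1 - q₁)) + s * (q₁ - q₂) ≠ 0 := by nlinarith
  have hfirst : tp2 - c = ((v - c) * (1 - q₁) - s) / (1 - q₁) := by
    simp only [tp2, pbar, p₂, add_assoc c, add_sub_cancel_left, mul_assoc q₂ (v - c)]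
    exact add_div_div_one_sub_div_mul_eq hq2.ne' (by linarith) (by linarith) hN
  refine ⟨hfirst, hfirst ▸ ?_⟩
  simp only [p₂, mul_assoc q₂ (v - c)]
  exact div_mul_one_sub_div_eq hq2.ne' (by linarith) hs0.ne' (by linarith)

theorem stmt_16 (q₁ q₂ c v s : ℝ) (hcv : c < v) (hq2 : 0 < q₂) (hq21 : q₂ < q₁) (hq1 : q₁ < 1)
    (hs0 : 0 < s) (hs : s < q₂ * (v - c) * (1 - q₁) / (1 - q₁ + q₂)) :
    let p₂ := (q₂ * (v - c) * (1 - q₁) - s * (1 - q₁ + q₂)) / (q₂ * (v - c) * (1 - q₁) - q₂ * s)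
    let pbar := c + (v - c) * (1 - q₁) + s * (q₁ - q₂) / q₂
    let tp2 := c + (pbar - c) / (1 - p₂ * q₁)
    tp2 - c = ((v - c) * (1 - q₁) - s) / (1 - q₁) ∧
    s / (q₂ * (1 - p₂)) = tp2 - c :=
  stmt_16_general q₁ q₂ c v s hq2 hq21 hq1 hs0 hs
end
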